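/- arXiv:2505.07330 — 2 statements merged into one kernel-verified Lean document; each statement's English description precedes it below -/
import Mathlib

section
/- Let (H_n)_{n ∈ ℕ} be an increasing chain of subgroups of a group G with G = ⋃_n H_n. Suppose that for every n, H_n is a normal subgroup of H_{n+1} and H_n ≠ H_{n+1}. If K is a proper subgroup of G contained in some H_m, then K is not abnormal in G. -/
def IsAbnormal {G : Type*} [Group G] (H : Subgroup G) : Prop :=
  ∀ g : G, g ∈ Subgroup.closure ((H : Set G) ∪ (fun x => g⁻¹ * x * g) '' (H : Set G))

theorem stmt_9 {G : Type*} [Group G] (H : ℕ → Subgroup G)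
    (hmono : ∀ n, H n ≤ H (n + 1))
    (hunion : ∀ g : G, ∃ n, g ∈ H n)
    (hnorm : ∀ n, ∀ x ∈ H (n + 1), ∀ y ∈ H n, x⁻¹ * y * x ∈ H n)
    (hne : ∀ n, H n ≠ H (n + 1))
    (K : Subgroup G) (hK : K ≠ ⊤) (m : ℕ) (hKm : K ≤ H m) :
    ¬ IsAbnormal K := by
  intro hab
  have hlt : H m < H (m + 1) := lt_of_le_of_ne (hmono m) (hne m)
  obtain ⟨g, hg1, hg0⟩ := SetLike.exists_of_lt hlt
  have hsub : Subgroup.closure ((K : Set G) ∪ (fun x => g⁻¹ * x * g) '' (K : Set G)) ≤ H m := by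
    rw [Subgroup.closure_le]
    rintro x (hx | ⟨y, hy, rfl⟩)
    · exact hKm hx
    · exact hnorm m g hg1 y (hKm hy)
  exact hg0 (hsub (hab g))
end

section
/- Let (H_n)_{n ∈ ℕ} be an increasing chain of subgroups of a group G with G = ⋃_n H_n. Suppose that for all even n, whenever g ∈ H_n \ {1} and h ∈ H_{n+2} \ H_n, the subgroup generated by g and h contains H_{n+1}. If K is a subgroup of G such that the set {n : K ∩ (H_{n+1} \ H_n) ≠ ∅} is infinite, then K = G. -/
theorem stmt_10 {G : Type*} [Group G] (H : ℕ → Subgroup G)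
    (hmono : ∀ n, H n ≤ H (n + 1))
    (hunion : ∀ g : G, ∃ n, g ∈ H n)
    (hgen : ∀ n, Even n → ∀ g ∈ H n, g ≠ 1 → ∀ h ∈ H (n + 2), h ∉ H n →
      H (n + 1) ≤ Subgroup.closure {g, h})
    (K : Subgroup G)
    (hinf : {n : ℕ | ∃ x ∈ K, x ∈ H (n + 1) ∧ x ∉ H n}.Infinite) :
    K = ⊤ := by
  have hmono' : Monotone H := monotone_nat_of_le_succ hmono
  obtain ⟨m, x, hxK, hx1, hx0⟩ := hinf.nonempty
  have hxne : x ≠ 1 := fun h => hx0 (h ▸ (H m).one_mem)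
  rw [Subgroup.eq_top_iff']
  intro g
  obtain ⟨k, hgk⟩ := hunion g
  obtain ⟨m', hm'set, hm'⟩ := hinf.exists_gt (max (m + 2) k)
  obtain ⟨y, hyK, hy1, hy0⟩ := hm'set
  have hm1 : m + 2 < m' := lt_of_le_of_lt (le_max_left _ _) hm'
  have hk : k < m' := lt_of_le_of_lt (le_max_right _ _) hm'
  have key : ∀ n, Even n → m + 1 ≤ n → y ∈ H (n + 2) → y ∉ H n → k ≤ n + 1 → g ∈ K := by
    intro n hne hmn hy2 hyn hkn
    have hxn : x ∈ H n := hmono' hmn hx1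
    have hsub : H (n + 1) ≤ K := by
      refine le_trans (hgen n hne x hxn hxne y hy2 hyn) ?_
      rw [Subgroup.closure_le]
      intro z hz
      rcases hz with h | h
      · exact h ▸ hxK
      · exact (Set.mem_singleton_iff.mp h) ▸ hyK
    exact hsub (hmono' hkn hgk)
  rcases Nat.even_or_odd m' with he | ho
  · exact key m' he (by omega) (hmono' (by omega) hy1) hy0 (by omega)
  · obtain ⟨t, ht⟩ := ho
    refine key (2 * t) (even_two_mul t) (by omega) (by rw [show 2 * t + 2 = m' + 1 by omega]; exact hy1) (fun h => hy0 (hmono' (by omega) h)) (by omega)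
end
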